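/- For all integers m, t, n with 0 ≤ m ≤ t ≤ n, U_t(n) ≤ U_{t−m}(n − m) + U_m(n), where by convention U_0(k) = 0 for every k. -/

import Mathlib

open scoped BigOperators

/-- A lazy transposition on `n` positions, encoded as a triple `(a, b, p)`. -/
abbrev LazyT (n : ℕ) := Fin n × Fin n × ℝ

/-- The triple `(a, b, p)` is a valid lazy transposition: `a ≠ b` and `p ∈ [0,1]`. -/
def LazyT.Valid {n : ℕ} (e : LazyT n) : Prop :=
  e.1 ≠ e.2.1 ∧ 0 ≤ e.2.2 ∧ e.2.2 ≤ 1

/-- A star transposition: its first coordinate is position `1` (index `0` in `Fin n`). -/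
def LazyT.IsStar {n : ℕ} (e : LazyT n) : Prop := (e.1 : ℕ) = 0

/-- `permDist L σ` is the probability that the composition of the independent lazy
transpositions in `L` (applied in order) equals the permutation `σ`. -/
noncomputable def permDist {n : ℕ} : List (LazyT n) → Equiv.Perm (Fin n) → ℝ
  | [], σ => if σ = 1 then 1 else 0
  | e :: L, σ =>
      e.2.2 * permDist L (σ * Equiv.swap e.1 e.2.1) + (1 - e.2.2) * permDist L σ

/-- `L` is a transposition shuffle on `n` points: all entries are valid lazy
transpositions and the composition is uniformly distributed on `Perm (Fin n)`. -/
def IsShuffle {n : ℕ} (L : List (LazyT n)) : Prop :=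
  (∀ e ∈ L, e.Valid) ∧
  ∀ σ : Equiv.Perm (Fin n), permDist L σ = 1 / (n.factorial : ℝ)

/-- `U n` is the minimum length of a transposition shuffle on `n` points. -/
noncomputable def U (n : ℕ) : ℕ :=
  sInf { ℓ : ℕ | ∃ L : List (LazyT n), L.length = ℓ ∧ IsShuffle L }

/-- The probability that, after applying the lazy transpositions in `L`, the `t`
labelled counters starting in positions `1, …, t` end up placed according to the
map `f` (counter `i` in position `f i`). -/
noncomputable def placeProb {n t : ℕ} (ht : t ≤ n) (L : List (LazyT n))
    (f : Fin t → Fin n) : ℝ :=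
  ∑ σ : Equiv.Perm (Fin n),
    if ∀ i : Fin t, σ (Fin.castLE ht i) = f i then permDist L σ else 0

/-- `L` is a `(t,n)`-shuffle: all entries are valid and the final placement of the
`t` counters is uniform over all `n!/(n-t)!` injections. -/
def IsTShuffle {n t : ℕ} (ht : t ≤ n) (L : List (LazyT n)) : Prop :=
  (∀ e ∈ L, e.Valid) ∧
  ∀ f : Fin t → Fin n, Function.Injective f →
    placeProb ht L f = ((n - t).factorial : ℝ) / (n.factorial : ℝ)

/-- `Ut t n` is the minimum length of a `(t,n)`-shuffle. -/
noncomputable def Ut (t n : ℕ) : ℕ :=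
  sInf { ℓ : ℕ | ∃ (ht : t ≤ n) (L : List (LazyT n)), L.length = ℓ ∧ IsTShuffle ht L }

/-- The probability that after applying `L` the set of positions occupied by the
`t` (indistinguishable) counters starting in positions `1, …, t` is exactly `S`. -/
noncomputable def occProb {n t : ℕ} (ht : t ≤ n) (L : List (LazyT n))
    (S : Finset (Fin n)) : ℝ :=
  ∑ σ : Equiv.Perm (Fin n),
    if Finset.image (fun i : Fin t => σ (Fin.castLE ht i)) Finset.univ = S
    then permDist L σ else 0

/-- `L` shuffles `t` indistinguishable counters over `n` positions: all entries are
valid and the occupied set is uniform over all `n.choose t` subsets of size `t`. -/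
def IsIndShuffle {n t : ℕ} (ht : t ≤ n) (L : List (LazyT n)) : Prop :=
  (∀ e ∈ L, e.Valid) ∧
  ∀ S : Finset (Fin n), S.card = t → occProb ht L S = 1 / (n.choose t : ℝ)

/-- `Uhat t n` is the minimum length of a sequence of lazy transpositions shuffling
`t` indistinguishable counters uniformly over `n` positions. -/
noncomputable def Uhat (t n : ℕ) : ℕ :=
  sInf { ℓ : ℕ | ∃ (ht : t ≤ n) (L : List (LazyT n)), L.length = ℓ ∧ IsIndShuffle ht L }

/-- `Ustar n` is the minimum length of a transposition shuffle on `n` points all of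
whose lazy transpositions are star transpositions. -/
noncomputable def Ustar (n : ℕ) : ℕ :=
  sInf { ℓ : ℕ | ∃ L : List (LazyT n), L.length = ℓ ∧ IsShuffle L ∧ ∀ e ∈ L, e.IsStar }

/-- `Utstar t n` is the minimum length of a `(t,n)`-shuffle all of whose lazy
transpositions are star transpositions. -/
noncomputable def Utstar (t n : ℕ) : ℕ :=
  sInf { ℓ : ℕ | ∃ (ht : t ≤ n) (L : List (LazyT n)),
    L.length = ℓ ∧ IsTShuffle ht L ∧ ∀ e ∈ L, e.IsStar }

/-!
Run an optimal `(t - m, n - m)`-shuffle on the positions `m + 1, …, n` and then an optimal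
`(m, n)`-shuffle. Conditioning on the permutation `π` produced by the second stage, the first `m`
counters, untouched by the first stage, end in the right place iff `π` puts them there; given
that, the remaining `t - m` counters need to occupy prescribed distinct positions among
`m + 1, …, n`, which the first stage achieves with probability `(n - t)! / (n - m)!`. Averaging
over `π` gives `(n - t)! / n!`.

The minima `U_t(n)` are attained because `(t, n)`-shuffles exist: the same composition with
`m = 1` reduces this to a `(1, n)`-shuffle, for which a sweep of star transpositions suffices.
-/

open Equiv Finset

noncomputable def permExp {n : ℕ} (L : List (LazyT n)) (F : Perm (Fin n) → ℝ) : ℝ :=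
  ∑ σ, permDist L σ * F σ

theorem permExp_nil {n : ℕ} (F : Perm (Fin n) → ℝ) : permExp [] F = F 1 := by
  simp [permExp, permDist]

theorem permExp_cons {n : ℕ} (e : LazyT n) (L : List (LazyT n)) (F : Perm (Fin n) → ℝ) :
    permExp (e :: L) F =
      e.2.2 * permExp L (fun σ => F (σ * swap e.1 e.2.1)) + (1 - e.2.2) * permExp L F := by
  simp only [permExp, permDist, add_mul, sum_add_distrib, mul_sum, mul_assoc]
  congr 1
  exact Fintype.sum_equiv (Equiv.mulRight (swap e.1 e.2.1)) _ _ fun σ => by simp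

theorem permExp_const_mul {n : ℕ} (L : List (LazyT n)) (c : ℝ) (F : Perm (Fin n) → ℝ) :
    permExp L (fun σ => c * F σ) = c * permExp L F := by
  simp only [permExp, mul_sum, mul_left_comm]

theorem permExp_comm {n : ℕ} (A B : List (LazyT n)) (F : Perm (Fin n) → Perm (Fin n) → ℝ) :
    permExp A (fun ρ => permExp B (F ρ)) = permExp B (fun π => permExp A (F · π)) := by
  simp only [permExp, mul_sum]
  rw [sum_comm]
  simp only [mul_left_comm]

theorem permExp_append {n : ℕ} (A B : List (LazyT n)) (F : Perm (Fin n) → ℝ) :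
    permExp (A ++ B) F = permExp A (fun ρ => permExp B (fun π => F (π * ρ))) := by
  induction A generalizing F with
  | nil => simp [permExp_nil]
  | cons e A ih => simp only [List.cons_append, permExp_cons, ih, mul_assoc]

theorem placeProb_eq_permExp {n t : ℕ} (ht : t ≤ n) (L : List (LazyT n)) (f : Fin t → Fin n) :
    placeProb ht L f =
      permExp L (fun σ => if ∀ i, σ (Fin.castLE ht i) = f i then 1 else 0) := by
  simp only [placeProb, permExp, mul_ite, mul_one, mul_zero]

theorem placeProb_append {n t : ℕ} (ht : t ≤ n) (A B : List (LazyT n)) (f : Fin t → Fin n) :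
    placeProb ht (A ++ B) f = permExp B (fun π => placeProb ht A (fun i => π⁻¹ (f i))) := by
  simp only [placeProb_eq_permExp, permExp_append, ← Perm.eq_inv_iff_eq]
  exact permExp_comm _ _ _

def LazyT.map {k n : ℕ} (φ : Fin k → Fin n) (e : LazyT k) : LazyT n :=
  (φ e.1, φ e.2.1, e.2.2)

theorem LazyT.Valid.map {k n : ℕ} {φ : Fin k → Fin n} (hφ : Function.Injective φ)
    {e : LazyT k} (he : e.Valid) : (LazyT.map φ e).Valid :=
  ⟨hφ.ne he.1, he.2⟩

theorem Equiv.Perm.extendDomain_swap {α β : Type*} [DecidableEq α] [DecidableEq β]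
    {p : β → Prop} [DecidablePred p] (f : α ≃ Subtype p) (a b : α) :
    (swap a b).extendDomain f = swap (f a : β) (f b) := by
  ext x
  by_cases hx : p x
  · obtain ⟨y, rfl⟩ : ∃ y, (f y : β) = x := ⟨f.symm ⟨x, hx⟩, by simp⟩
    rw [Perm.extendDomain_apply_image]
    exact ((Subtype.val_injective.comp f.injective).swap_apply a b y).symm
  · rw [Perm.extendDomain_apply_not_subtype _ _ hx,
      swap_apply_of_ne_of_ne (by rintro rfl; exact hx (f a).2) (by rintro rfl; exact hx (f b).2)]

theorem permExp_map_extendDomain {k n : ℕ} {p : Fin n → Prop} [DecidablePred p]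
    (f : Fin k ≃ Subtype p) (L : List (LazyT k)) (F : Perm (Fin n) → ℝ) :
    permExp (L.map (LazyT.map (fun a => (f a : Fin n)))) F =
      permExp L (fun τ => F (τ.extendDomain f)) := by
  induction L generalizing F with
  | nil => simp [permExp_nil]
  | cons e L ih =>
    simp only [List.map_cons, permExp_cons, LazyT.map, ih, ← Perm.extendDomain_swap,
      Perm.extendDomain_mul]

def shift (m : ℕ) {n : ℕ} (j : Fin (n - m)) : Fin n := ⟨m + j, by omega⟩

theorem shift_injective (m : ℕ) {n : ℕ} : Function.Injective (shift m (n := n)) :=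
  fun a b hab => Fin.ext (by simpa [shift] using congrArg Fin.val hab)

theorem castLE_shift {m t n : ℕ} (hst : t - m ≤ n - m) (ht : t ≤ n) (j : Fin (t - m)) :
    Fin.castLE ht (shift m j) = shift m (Fin.castLE hst j) := rfl

def shiftEquiv (m n : ℕ) : Fin (n - m) ≃ {x : Fin n // m ≤ (x : ℕ)} where
  toFun j := ⟨shift m j, Nat.le_add_right m j⟩
  invFun x := ⟨x.1 - m, by omega⟩
  left_inv j := by ext; simp [shift]
  right_inv x := by ext; simp [shift]; omega

theorem extendDomain_shiftEquiv_shift {m n : ℕ} (τ : Perm (Fin (n - m))) (j : Fin (n - m)) :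
    τ.extendDomain (shiftEquiv m n) (shift m j) = shift m (τ j) :=
  Perm.extendDomain_apply_image τ (shiftEquiv m n) j

theorem extendDomain_shiftEquiv_of_lt {m n : ℕ} (τ : Perm (Fin (n - m))) {x : Fin n}
    (hx : (x : ℕ) < m) : τ.extendDomain (shiftEquiv m n) x = x :=
  Perm.extendDomain_apply_not_subtype τ (shiftEquiv m n) (by omega)

def liftShift (m : ℕ) {n : ℕ} (L : List (LazyT (n - m))) : List (LazyT n) :=
  L.map (LazyT.map (shift m))

theorem permExp_liftShift {m n : ℕ} (L : List (LazyT (n - m))) (F : Perm (Fin n) → ℝ) :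
    permExp (liftShift m L) F = permExp L (fun τ => F (τ.extendDomain (shiftEquiv m n))) :=
  permExp_map_extendDomain (shiftEquiv m n) L F

theorem placeProb_liftShift {m t n : ℕ} (hm : m ≤ t) (ht : t ≤ n) (L : List (LazyT (n - m)))
    {h : Fin t → Fin n} {g : Fin (t - m) → Fin (n - m)}
    (hfix : ∀ i : Fin m, h (Fin.castLE hm i) = Fin.castLE (hm.trans ht) i)
    (hg : ∀ j, h (shift m j) = shift m (g j)) :
    placeProb ht (liftShift m L) h = placeProb (Nat.sub_le_sub_right ht m) L g := by
  simp only [placeProb_eq_permExp, permExp_liftShift]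
  congr 1
  funext τ
  congr 1
  apply propext
  constructor
  · intro H j
    apply shift_injective m
    rw [← hg, ← H (shift m j), castLE_shift (Nat.sub_le_sub_right ht m),
      extendDomain_shiftEquiv_shift]
  · intro H i
    rcases lt_or_ge (i : ℕ) m with hi | hi
    · obtain ⟨i, rfl⟩ : ∃ i' : Fin m, Fin.castLE hm i' = i := ⟨⟨i, hi⟩, rfl⟩
      rw [hfix, Fin.castLE_castLE, extendDomain_shiftEquiv_of_lt τ i.isLt]
    · obtain ⟨j, rfl⟩ : ∃ j : Fin (t - m), shift m j = i :=
        ⟨⟨i - m, by omega⟩, Fin.ext (by simp [shift]; omega)⟩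
      rw [castLE_shift (Nat.sub_le_sub_right ht m), extendDomain_shiftEquiv_shift, H, hg]

theorem placeProb_liftShift_eq_zero {m t n : ℕ} (hm : m ≤ t) (ht : t ≤ n)
    (L : List (LazyT (n - m))) {h : Fin t → Fin n}
    (hfix : ¬ ∀ i : Fin m, h (Fin.castLE hm i) = Fin.castLE (hm.trans ht) i) :
    placeProb ht (liftShift m L) h = 0 := by
  obtain ⟨i, hi⟩ := not_forall.mp hfix
  have hnot : ∀ τ : Perm (Fin (n - m)),
      ¬ ∀ i', τ.extendDomain (shiftEquiv m n) (Fin.castLE ht i') = h i' := fun τ H =>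
    hi (by rw [← H, Fin.castLE_castLE, extendDomain_shiftEquiv_of_lt τ i.isLt])
  rw [placeProb_eq_permExp, permExp_liftShift]
  simp [hnot, permExp]

theorem exists_shift_eq_of_injective {m t n : ℕ} (hm : m ≤ t) (ht : t ≤ n)
    {h : Fin t → Fin n} (hinj : Function.Injective h)
    (hfix : ∀ i : Fin m, h (Fin.castLE hm i) = Fin.castLE (hm.trans ht) i) :
    ∃ g : Fin (t - m) → Fin (n - m),
      Function.Injective g ∧ ∀ j, h (shift m j) = shift m (g j) := by
  have hge : ∀ j, m ≤ (h (shift m j) : ℕ) := by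
    intro j
    by_contra! hlt
    have : (h (shift m j) : ℕ) = m + j :=
      congrArg Fin.val (hinj ((hfix ⟨_, hlt⟩).trans (Fin.ext rfl)))
    omega
  refine ⟨fun j => ⟨h (shift m j) - m, by have := (h (shift m j)).isLt; have := hge j; omega⟩,
    fun a b hab => shift_injective m (hinj (Fin.ext ?_)), fun j => Fin.ext ?_⟩
  · have : (h (shift m a) : ℕ) - m = (h (shift m b) : ℕ) - m := congrArg Fin.val hab
    have := hge a
    have := hge b
    omega
  · have := hge j
    show (h (shift m j) : ℕ) = m + ((h (shift m j) : ℕ) - m)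
    omega

theorem IsTShuffle.liftShift_append {m t n : ℕ} (hm : m ≤ t) (ht : t ≤ n)
    {L₁ : List (LazyT (n - m))} {L₂ : List (LazyT n)}
    (h₁ : IsTShuffle (Nat.sub_le_sub_right ht m) L₁) (h₂ : IsTShuffle (hm.trans ht) L₂) :
    IsTShuffle ht (liftShift m L₁ ++ L₂) := by
  refine ⟨fun e he => ?_, fun f hf => ?_⟩
  · rcases List.mem_append.mp he with he | he
    · obtain ⟨e', he', rfl⟩ := List.mem_map.mp he
      exact (h₁.1 e' he').map (shift_injective m)
    · exact h₂.1 e he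
  have hπ : ∀ π : Perm (Fin n), placeProb ht (liftShift m L₁) (fun i => π⁻¹ (f i)) =
      ((n - t).factorial / (n - m).factorial : ℝ) *
        if ∀ i : Fin m, π (Fin.castLE (hm.trans ht) i) = f (Fin.castLE hm i) then 1 else 0 := by
    intro π
    have hfix_iff : (∀ i : Fin m, π⁻¹ (f (Fin.castLE hm i)) = Fin.castLE (hm.trans ht) i) ↔
        ∀ i : Fin m, π (Fin.castLE (hm.trans ht) i) = f (Fin.castLE hm i) :=
      forall_congr' fun i => Perm.inv_eq_iff_eq.trans eq_comm
    by_cases hfix : ∀ i : Fin m, π⁻¹ (f (Fin.castLE hm i)) = Fin.castLE (hm.trans ht) i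
    · obtain ⟨g, hg, hfg⟩ := exists_shift_eq_of_injective hm ht
        (h := fun i => π⁻¹ (f i)) (fun a b hab => hf (π⁻¹.injective hab)) hfix
      rw [placeProb_liftShift hm ht L₁ hfix hfg, h₁.2 g hg, Nat.sub_sub_sub_cancel_right hm,
        if_pos (hfix_iff.mp hfix), mul_one]
    · rw [placeProb_liftShift_eq_zero hm ht L₁ hfix, if_neg (hfix_iff.not.mp hfix), mul_zero]
  rw [placeProb_append, funext hπ, permExp_const_mul, ← placeProb_eq_permExp,
    h₂.2 (fun i => f (Fin.castLE hm i)) (hf.comp (Fin.castLE_injective hm))]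
  have := (n - m).factorial_ne_zero
  field_simp

/-- The swap with `b` fires with probability one over the number of positions still available,
so the counter at `c` stops at each position of `c :: bs` with the same probability. -/
noncomputable def starSweep {n : ℕ} (c : Fin n) : List (Fin n) → List (LazyT n)
  | [] => []
  | b :: bs => (c, b, 1 / ((bs.length : ℝ) + 2)) :: starSweep c bs

theorem starSweep_valid {n : ℕ} {c : Fin n} {bs : List (Fin n)} (hc : c ∉ bs) :
    ∀ e ∈ starSweep c bs, e.Valid := by
  induction bs with
  | nil => simp [starSweep]
  | cons b bs ih =>
    rw [List.mem_cons, not_or] at hc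
    rintro e (_ | ⟨_, he⟩)
    · refine ⟨hc.1, by positivity, ?_⟩
      rw [div_le_one (by positivity)]
      linarith [(bs.length.cast_nonneg : (0 : ℝ) ≤ bs.length)]
    · exact ih hc.2 e he

theorem permExp_starSweep_apply_of_ne {n : ℕ} (c : Fin n) {bs : List (Fin n)} {x : Fin n}
    (hxc : x ≠ c) (hx : x ∉ bs) (G : Fin n → ℝ) :
    permExp (starSweep c bs) (fun σ => G (σ x)) = G x := by
  induction bs with
  | nil => simp [starSweep, permExp_nil]
  | cons b bs ih =>
    rw [List.mem_cons, not_or] at hx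
    simp only [starSweep, permExp_cons, Perm.mul_apply, swap_apply_of_ne_of_ne hxc hx.1, ih hx.2]
    ring

theorem permExp_starSweep {n : ℕ} (c : Fin n) {bs : List (Fin n)} (hnd : (c :: bs).Nodup)
    (G : Fin n → ℝ) :
    permExp (starSweep c bs) (fun σ => G (σ c)) = ((c :: bs).map G).sum / (c :: bs).length := by
  induction bs with
  | nil => simp [starSweep, permExp_nil]
  | cons b bs ih =>
    simp only [List.nodup_cons, List.mem_cons, not_or] at hnd ih
    have hnd' : c ∉ bs ∧ bs.Nodup := ⟨hnd.1.2, hnd.2.2⟩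
    simp only [starSweep, permExp_cons, Perm.mul_apply, swap_apply_left,
      permExp_starSweep_apply_of_ne c (Ne.symm hnd.1.1) hnd.2.1, ih hnd', List.map_cons,
      List.sum_cons, List.length_cons]
    push_cast
    field_simp
    ring

theorem isTShuffle_starSweep (k : ℕ) :
    IsTShuffle (Nat.le_add_left 1 k) (starSweep 0 ((List.finRange k).map Fin.succ)) := by
  have hnd : (0 :: (List.finRange k).map Fin.succ).Nodup := by
    rw [← List.finRange_succ]
    exact List.nodup_finRange _
  refine ⟨starSweep_valid (List.nodup_cons.mp hnd).1, fun f _ => ?_⟩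
  have hsweep := permExp_starSweep 0 hnd (fun y => if y = f 0 then (1 : ℝ) else 0)
  rw [← List.finRange_succ, ← Fin.sum_univ_def, Finset.sum_ite_eq', if_pos (Finset.mem_univ _),
    List.length_finRange] at hsweep
  rw [placeProb_eq_permExp]
  simp only [Fin.forall_fin_one, Fin.castLE_zero]
  rw [hsweep, Nat.add_sub_cancel, Nat.factorial_succ]
  push_cast
  field_simp

theorem exists_isTShuffle : ∀ {t n : ℕ} (ht : t ≤ n), ∃ L : List (LazyT n), IsTShuffle ht L
  | 0, n, ht => ⟨[], by simp, fun f _ => by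
    rw [placeProb_eq_permExp, permExp_nil, Nat.sub_zero, div_self (by positivity)]
    simp⟩
  | t + 1, n, ht => by
    obtain ⟨k, rfl⟩ : ∃ k, n = k + 1 := ⟨n - 1, by omega⟩
    obtain ⟨L₁, h₁⟩ := exists_isTShuffle (t := t) (n := k) (by omega)
    exact ⟨_, IsTShuffle.liftShift_append (m := 1) (by omega) ht h₁ (isTShuffle_starSweep k)⟩

theorem Ut_le_length {t n : ℕ} {ht : t ≤ n} {L : List (LazyT n)} (hL : IsTShuffle ht L) :
    Ut t n ≤ L.length :=
  Nat.sInf_le ⟨ht, L, rfl, hL⟩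

theorem exists_isTShuffle_length_eq_Ut {t n : ℕ} (ht : t ≤ n) :
    ∃ L : List (LazyT n), L.length = Ut t n ∧ IsTShuffle ht L := by
  obtain ⟨L, hL⟩ := exists_isTShuffle ht
  obtain ⟨_, L', hlen, hL'⟩ : Ut t n ∈
      {ℓ : ℕ | ∃ (ht : t ≤ n) (L : List (LazyT n)), L.length = ℓ ∧ IsTShuffle ht L} :=
    Nat.sInf_mem ⟨L.length, ht, L, rfl, hL⟩
  exact ⟨L', hlen, hL'⟩

theorem simple_divide (m t n : ℕ) (hm : m ≤ t) (ht : t ≤ n) :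
    Ut t n ≤ Ut (t - m) (n - m) + Ut m n := by
  obtain ⟨L₁, hlen₁, h₁⟩ := exists_isTShuffle_length_eq_Ut (Nat.sub_le_sub_right ht m)
  obtain ⟨L₂, hlen₂, h₂⟩ := exists_isTShuffle_length_eq_Ut (hm.trans ht)
  calc Ut t n ≤ (liftShift m L₁ ++ L₂).length :=
        Ut_le_length (h₁.liftShift_append hm ht h₂)
    _ = Ut (t - m) (n - m) + Ut m n := by simp [liftShift, hlen₁, hlen₂]
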